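/- Let q > 2 and define F : (0, π/2] → ℝ by F(α) = (sin α)^{1-q} [ ∫_{-cot α}^{tan(α/2)} ( (z²+1)^{-q} + ((z sin α + cos α)/(z²+1))^q ) dz + ∫_{cot α}^{cot(α/2)} ( (z²+1)^{-q} + ((z sin α - cos α)/(z²+1))^q ) dz ]. Then F is strictly monotone decreasing on (0, π/2] and attains its global minimum at α = π/2. -/

import Mathlib

open MeasureTheory Set Real

/-!
Put `d = π/2 - α`. The substitutions `z = tan (t - d/2)` in the first integral and
`z = tan (d/2 - t)` in the second turn `F(α)` into the single integral
`∫_{-π/4}^{π/4} ψ_{cos 2t}(sin²(t + d/2) / cos d) dt` (the two ranges meet at `t = -d/2`), where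
`ψ_k(p) = (p + k)^{q-1} + p^{q/2} (p + k)^{q/2-1}`. The point is that
`cos²(t - d/2) - sin²(t + d/2) = cos 2t · cos d`, so the index `k = cos 2t` does not depend on `d`.

Pairing `t` with `-t`, it suffices that `ψ(P) + ψ(Q)` is strictly increasing in `d` for each
`t ∈ (0, π/4)`, where `P = sin²(t + d/2) / cos d` and `Q = sin²(t - d/2) / cos d`. Now `ψ'` is
positive and increasing, `0 ≤ Q ≤ P`, `P' > 0` and `P' + Q' = sin d / cos² d > 0`, hence
`ψ'(P) P' + ψ'(Q) Q' > 0`.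
-/

/-- The angle function `F(α)` of the renormalized tangent-point energy. -/
noncomputable def Ffun (q α : ℝ) : ℝ :=
  sin α ^ (1 - q) *
    ((∫ z in (-cot α)..(tan (α / 2)),
        ((z ^ 2 + 1) ^ (-q) + ((z * sin α + cos α) / (z ^ 2 + 1)) ^ q)) +
      (∫ z in (cot α)..(cot (α / 2)),
        ((z ^ 2 + 1) ^ (-q) + ((z * sin α - cos α) / (z ^ 2 + 1)) ^ q)))

variable {q k p : ℝ}

theorem rpow_sq_rpow_div_two {x : ℝ} (hx : 0 ≤ x) (q : ℝ) : (x ^ 2) ^ (q / 2) = x ^ q := by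
  rw [← rpow_natCast, ← rpow_mul hx]
  push_cast
  ring_nf

theorem cos_sq_sub_sin_sq (a b : ℝ) : cos a ^ 2 - sin b ^ 2 = cos (a + b) * cos (a - b) := by
  rw [cos_add, cos_sub]
  linear_combination sin b ^ 2 * sin_sq_add_cos_sq a - cos a ^ 2 * sin_sq_add_cos_sq b

theorem sin_sq_sub_sin_sq (a b : ℝ) : sin a ^ 2 - sin b ^ 2 = sin (a + b) * sin (a - b) := by
  rw [sin_add, sin_sub]
  linear_combination sin b ^ 2 * sin_sq_add_cos_sq a - sin a ^ 2 * sin_sq_add_cos_sq b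

theorem cot_eq_tan_pi_div_two_sub (x : ℝ) : cot x = tan (π / 2 - x) := by
  rw [← tan_inv_eq_cot, tan_pi_div_two_sub]

theorem hasDerivAt_sin_sq_div_cos (t : ℝ) {d : ℝ} (hd : cos d ≠ 0) :
    HasDerivAt (fun d => sin (t + d / 2) ^ 2 / cos d)
      (sin (t + d / 2) * cos (t - d / 2) / cos d ^ 2) d := by
  have hs : HasDerivAt (fun d => sin (t + d / 2)) (cos (t + d / 2) * (1 / 2)) d :=
    ((hasDerivAt_id' d).div_const 2 |>.const_add t).sin
  refine ((hs.pow 2).div (hasDerivAt_cos d) hd).congr_deriv ?_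
  rw [Pi.pow_apply, show t - d / 2 = t + d / 2 - d by ring, cos_sub]
  field_simp
  ring

theorem mul_add_mul_pos_of_le {a b x y : ℝ} (hb : 0 < b) (hba : b ≤ a) (hx : 0 < x)
    (hxy : 0 < x + y) : 0 < a * x + b * y := by
  rcases le_or_gt 0 y with hy | hy <;> nlinarith

theorem integral_comp_tan_div_cos_sq {f : ℝ → ℝ} (hf : Continuous f) {a b : ℝ}
    (hab : uIcc a b ⊆ Ioo (-(π / 2)) (π / 2)) :
    ∫ θ in a..b, f (tan θ) / cos θ ^ 2 = ∫ z in tan a..tan b, f z := by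
  have hcos : ∀ θ ∈ uIcc a b, cos θ ≠ 0 := fun θ hθ => (cos_pos_of_mem_Ioo (hab hθ)).ne'
  simp_rw [div_eq_mul_one_div (f _)]
  exact intervalIntegral.integral_comp_mul_deriv (fun θ hθ => hasDerivAt_tan (hcos θ hθ))
    (continuousOn_const.div (continuous_cos.pow 2).continuousOn fun θ hθ =>
      pow_ne_zero 2 (hcos θ hθ)) hf

theorem integral_eq_integral_add_comp_neg {f : ℝ → ℝ} (hf : Continuous f) (a : ℝ) :
    ∫ x in -a..a, f x = ∫ x in 0..a, (f x + f (-x)) := by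
  rw [← intervalIntegral.integral_add_adjacent_intervals (b := 0) (hf.intervalIntegrable _ _)
    (hf.intervalIntegrable _ _), intervalIntegral.integral_add (g := fun x => f (-x))
    (hf.intervalIntegrable _ _) ((hf.comp continuous_neg).intervalIntegrable _ _), add_comm,
    intervalIntegral.integral_comp_neg (fun x => f x), neg_zero]

noncomputable def tpProfile (q k p : ℝ) : ℝ :=
  (p + k) ^ (q - 1) + p ^ (q / 2) * (p + k) ^ (q / 2 - 1)

/-- The derivative of `tpProfile q k`, arranged so that each summand is visibly monotone in `p`. -/
noncomputable def tpProfileDeriv (q k p : ℝ) : ℝ :=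
  (q - 1) * (p + k) ^ (q - 2) + (p * (p + k)) ^ (q / 2 - 1) * (q - 1 - (q / 2 - 1) * (k / (p + k)))

theorem continuous_tpProfile (hq : 2 ≤ q) : Continuous (Function.uncurry (tpProfile q)) := by
  have h : ∀ r : ℝ, 0 ≤ r → Continuous fun x : ℝ × ℝ => (x.2 + x.1) ^ r := fun r hr =>
    (continuous_snd.add continuous_fst).rpow_const fun _ => Or.inr hr
  exact (h _ (by linarith)).add
    ((continuous_snd.rpow_const fun _ => Or.inr (by linarith)).mul (h _ (by linarith)))

theorem hasDerivAt_tpProfile (hq : 2 ≤ q) (hp : 0 ≤ p) (hpk : 0 < p + k) :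
    HasDerivAt (tpProfile q k) (tpProfileDeriv q k p) p := by
  have hbase : HasDerivAt (fun p => p + k) 1 p := (hasDerivAt_id p).add_const k
  have h1 := hbase.rpow_const (p := q - 1) (Or.inl hpk.ne')
  have h2 := (hasDerivAt_id' p).rpow_const (p := q / 2) (Or.inr (by linarith))
  have h3 := hbase.rpow_const (p := q / 2 - 1) (Or.inl hpk.ne')
  refine (h1.add (h2.mul h3)).congr_deriv ?_
  have e1 : p ^ (q / 2) = p ^ (q / 2 - 1) * p := by
    rw [← rpow_add_one' hp (by linarith)]; ring_nf
  have e2 : (p + k) ^ (q / 2 - 1 - 1) = (p + k) ^ (q / 2 - 1) / (p + k) := by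
    rw [rpow_sub_one hpk.ne']
  rw [tpProfileDeriv, mul_rpow hp hpk.le, e1, e2, show q - 1 - 1 = q - 2 by ring]
  field_simp
  ring

theorem tpProfileDeriv_weight_nonneg (hq : 2 ≤ q) (hk : 0 < k) (hp : 0 ≤ p) :
    0 ≤ q - 1 - (q / 2 - 1) * (k / (p + k)) := by
  have : k / (p + k) ≤ 1 := div_le_one_of_le₀ (by linarith) (by linarith)
  nlinarith

theorem tpProfileDeriv_pos (hq : 2 ≤ q) (hk : 0 < k) (hp : 0 ≤ p) :
    0 < tpProfileDeriv q k p :=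
  add_pos_of_pos_of_nonneg (mul_pos (by linarith) (rpow_pos_of_pos (by linarith) _))
    (mul_nonneg (rpow_nonneg (by positivity) _) (tpProfileDeriv_weight_nonneg hq hk hp))

theorem monotoneOn_tpProfileDeriv (hq : 2 ≤ q) (hk : 0 < k) :
    MonotoneOn (tpProfileDeriv q k) (Ici 0) := by
  intro p₁ hp₁ p₂ hp₂ hp
  simp only [mem_Ici] at hp₁ hp₂
  have := tpProfileDeriv_weight_nonneg hq hk hp₁
  unfold tpProfileDeriv
  gcongr <;> linarith

theorem tpProfile_sq_div {c u v : ℝ} (hc : 0 < c) (hu : 0 < u) (hv : 0 ≤ v) :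
    tpProfile q ((u ^ 2 - v ^ 2) / c) (v ^ 2 / c) =
      c ^ (1 - q) * (((u ^ 2) ^ q + (u * v) ^ q) / u ^ 2) := by
  have hU : 0 < u ^ 2 / c := by positivity
  have hsum : v ^ 2 / c + (u ^ 2 - v ^ 2) / c = u ^ 2 / c := by ring
  have hmix : (v ^ 2 / c) ^ (q / 2) * (u ^ 2 / c) ^ (q / 2) = (u * v) ^ q / c ^ q := by
    rw [← mul_rpow (by positivity) hU.le, show v ^ 2 / c * (u ^ 2 / c) = (u * v / c) ^ 2 by ring,
      rpow_sq_rpow_div_two (by positivity), div_rpow (by positivity) hc.le]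
  rw [tpProfile, hsum, rpow_sub_one hU.ne', rpow_sub_one hU.ne', mul_div_assoc', hmix,
    div_rpow (by positivity) hc.le, rpow_sub hc, rpow_one]
  field_simp

/-- `Ffun q α` integrates `tpKernel q (sin α) (cos α)` and `tpKernel q (sin α) (-cos α)`. -/
noncomputable def tpKernel (q σ κ z : ℝ) : ℝ :=
  (z ^ 2 + 1) ^ (-q) + ((z * σ + κ) / (z ^ 2 + 1)) ^ q

theorem continuous_tpKernel (hq : 0 ≤ q) (σ κ : ℝ) : Continuous (tpKernel q σ κ) := by
  have h : Continuous fun z : ℝ => z ^ 2 + 1 := by fun_prop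
  exact (h.rpow_const fun z => Or.inl (by positivity)).add
    (((continuous_id.mul continuous_const).add continuous_const).div h
      (fun z => by positivity) |>.rpow_const fun _ => Or.inr hq)

theorem rpow_mul_tpKernel_tan_div {c θ σ κ : ℝ} (hc : 0 < c) (hθ : 0 < cos θ)
    (hw : 0 ≤ sin θ * σ + κ * cos θ) :
    c ^ (1 - q) * (tpKernel q σ κ (tan θ) / cos θ ^ 2) =
      tpProfile q ((cos θ ^ 2 - (sin θ * σ + κ * cos θ) ^ 2) / c)
        ((sin θ * σ + κ * cos θ) ^ 2 / c) := by
  have h₁ : tan θ ^ 2 + 1 = (cos θ ^ 2)⁻¹ := by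
    rw [← inv_one_add_tan_sq hθ.ne', inv_inv, add_comm]
  have h₂ : (tan θ * σ + κ) / (tan θ ^ 2 + 1) = cos θ * (sin θ * σ + κ * cos θ) := by
    rw [h₁, tan_eq_sin_div_cos]
    field_simp
  rw [tpProfile_sq_div hc hθ hw, tpKernel, h₂, h₁, inv_rpow (by positivity),
    rpow_neg (by positivity), inv_inv]

noncomputable def tpIntegrand (q d t : ℝ) : ℝ :=
  tpProfile q (cos (2 * t)) (sin (t + d / 2) ^ 2 / cos d)

theorem continuous_tpIntegrand (hq : 2 ≤ q) (d : ℝ) : Continuous (tpIntegrand q d) :=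
  (continuous_tpProfile hq).comp
    ((continuous_cos.comp (continuous_const.mul continuous_id)).prodMk
      (((continuous_sin.comp (continuous_id.add continuous_const)).pow 2).div_const _))

theorem continuousOn_tpIntegrand (hq : 2 ≤ q) (t : ℝ) :
    ContinuousOn (fun d => tpIntegrand q d t) (Ioo (-(π / 2)) (π / 2)) := by
  refine (continuous_tpProfile hq).comp_continuousOn (continuousOn_const.prodMk ?_)
  exact ((continuous_sin.comp (continuous_const.add (continuous_id.div_const 2))).pow 2
    ).continuousOn.div continuous_cos.continuousOn fun d hd => (cos_pos_of_mem_Ioo hd).ne'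

theorem cos_rpow_mul_integral_tpKernel_sin (hq : 0 ≤ q) {d : ℝ} (hd₀ : 0 ≤ d)
    (hd₁ : d < π / 2) :
    cos d ^ (1 - q) * ∫ z in -tan d..tan (π / 4 - d / 2), tpKernel q (cos d) (sin d) z =
      ∫ t in -(d / 2)..π / 4, tpIntegrand q d t := by
  have hc : 0 < cos d := cos_pos_of_mem_Ioo ⟨by linarith, hd₁⟩
  rw [← tan_neg, show -d = -(d / 2) - d / 2 by ring, ← integral_comp_tan_div_cos_sq
    (continuous_tpKernel hq _ _) ?_, ← intervalIntegral.integral_comp_sub_right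
    (fun θ => tpKernel q (cos d) (sin d) (tan θ) / cos θ ^ 2),
    ← intervalIntegral.integral_const_mul]
  · refine intervalIntegral.integral_congr fun t ht => ?_
    rw [uIcc_of_le (by linarith)] at ht
    have hw : sin (t - d / 2) * cos d + sin d * cos (t - d / 2) = sin (t + d / 2) := by
      rw [show t + d / 2 = t - d / 2 + d by ring, sin_add]; ring
    have hk : cos (t - d / 2) ^ 2 - sin (t + d / 2) ^ 2 = cos (2 * t) * cos d := by
      rw [cos_sq_sub_sin_sq, show t - d / 2 + (t + d / 2) = 2 * t by ring,
        show t - d / 2 - (t + d / 2) = -d by ring, cos_neg]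
    have hs : 0 ≤ sin (t + d / 2) :=
      sin_nonneg_of_nonneg_of_le_pi (by linarith [ht.1]) (by linarith [ht.2, pi_pos])
    have hθ : 0 < cos (t - d / 2) := cos_pos_of_mem_Ioo ⟨by linarith [ht.1], by linarith [ht.2]⟩
    rw [rpow_mul_tpKernel_tan_div hc hθ (hw ▸ hs), hw, hk, mul_div_cancel_right₀ _ hc.ne',
      tpIntegrand]
  · rw [uIcc_of_le (by linarith)]
    exact Icc_subset_Ioo (by linarith) (by linarith)

theorem cos_rpow_mul_integral_tpKernel_neg_sin (hq : 0 ≤ q) {d : ℝ} (hd₀ : 0 ≤ d)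
    (hd₁ : d < π / 2) :
    cos d ^ (1 - q) * ∫ z in tan d..tan (π / 4 + d / 2), tpKernel q (cos d) (-sin d) z =
      ∫ t in -(π / 4)..-(d / 2), tpIntegrand q d t := by
  have hc : 0 < cos d := cos_pos_of_mem_Ioo ⟨by linarith, hd₁⟩
  rw [show tan d = tan (d / 2 - -(d / 2)) by ring_nf,
    show tan (π / 4 + d / 2) = tan (d / 2 - -(π / 4)) by ring_nf,
    ← integral_comp_tan_div_cos_sq (continuous_tpKernel hq _ _) ?_,
    ← intervalIntegral.integral_comp_sub_left
    (fun θ => tpKernel q (cos d) (-sin d) (tan θ) / cos θ ^ 2),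
    ← intervalIntegral.integral_const_mul]
  · refine intervalIntegral.integral_congr fun t ht => ?_
    rw [uIcc_of_le (by linarith)] at ht
    have hw : sin (d / 2 - t) * cos d + -sin d * cos (d / 2 - t) = -sin (t + d / 2) := by
      rw [← sin_neg (t + d / 2), show -(t + d / 2) = d / 2 - t - d by ring, sin_sub (d / 2 - t) d]
      ring
    have hk : cos (d / 2 - t) ^ 2 - sin (t + d / 2) ^ 2 = cos (2 * t) * cos d := by
      rw [cos_sq_sub_sin_sq, show d / 2 - t + (t + d / 2) = d by ring,
        show d / 2 - t - (t + d / 2) = -(2 * t) by ring, cos_neg, mul_comm]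
    have hs : sin (t + d / 2) ≤ 0 :=
      sin_nonpos_of_nonpos_of_neg_pi_le (by linarith [ht.2]) (by linarith [ht.1, pi_pos])
    have hθ : 0 < cos (d / 2 - t) := cos_pos_of_mem_Ioo ⟨by linarith [ht.2], by linarith [ht.1]⟩
    rw [rpow_mul_tpKernel_tan_div hc hθ (by rw [hw]; linarith), hw, neg_sq, hk,
      mul_div_cancel_right₀ _ hc.ne', tpIntegrand]
  · rw [uIcc_of_le (by linarith)]
    exact Icc_subset_Ioo (by linarith) (by linarith)

theorem Ffun_eq_integral_tpIntegrand (hq : 2 ≤ q) {α : ℝ} (hα : α ∈ Ioc 0 (π / 2)) :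
    Ffun q α = ∫ t in -(π / 4)..π / 4, tpIntegrand q (π / 2 - α) t := by
  obtain ⟨d, rfl⟩ : ∃ d, α = π / 2 - d := ⟨π / 2 - α, by ring⟩
  obtain ⟨hd₁, hd₀⟩ : d < π / 2 ∧ 0 ≤ d := by constructor <;> linarith [hα.1, hα.2]
  have hF : Ffun q (π / 2 - d) = cos d ^ (1 - q) *
      ((∫ z in -tan d..tan (π / 4 - d / 2), tpKernel q (cos d) (sin d) z) +
        ∫ z in tan d..tan (π / 4 + d / 2), tpKernel q (cos d) (-sin d) z) := by
    rw [Ffun, sin_pi_div_two_sub, cos_pi_div_two_sub, cot_eq_tan_pi_div_two_sub,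
      cot_eq_tan_pi_div_two_sub, sub_sub_cancel, show (π / 2 - d) / 2 = π / 4 - d / 2 by ring,
      show π / 2 - (π / 4 - d / 2) = π / 4 + d / 2 by ring]
    simp only [tpKernel, ← sub_eq_add_neg]
  rw [hF, sub_sub_cancel, mul_add, cos_rpow_mul_integral_tpKernel_sin (by linarith) hd₀ hd₁,
    cos_rpow_mul_integral_tpKernel_neg_sin (by linarith) hd₀ hd₁, add_comm,
    intervalIntegral.integral_add_adjacent_intervals
      ((continuous_tpIntegrand hq d).intervalIntegrable _ _)
      ((continuous_tpIntegrand hq d).intervalIntegrable _ _)]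

theorem hasDerivAt_tpIntegrand (hq : 2 ≤ q) {t d : ℝ} (ht : 0 < cos (2 * t)) (hd : 0 < cos d) :
    HasDerivAt (fun d => tpIntegrand q d t)
      (tpProfileDeriv q (cos (2 * t)) (sin (t + d / 2) ^ 2 / cos d) *
        (sin (t + d / 2) * cos (t - d / 2) / cos d ^ 2)) d :=
  (hasDerivAt_tpProfile hq (by positivity) (by positivity)).comp d
    (hasDerivAt_sin_sq_div_cos t hd.ne')

theorem strictMonoOn_tpIntegrand_add_neg (hq : 2 ≤ q) {t : ℝ} (ht : t ∈ Ioo 0 (π / 4)) :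
    StrictMonoOn (fun d => tpIntegrand q d t + tpIntegrand q d (-t)) (Ico 0 (π / 2)) := by
  obtain ⟨ht₀, ht₁⟩ := ht
  refine strictMonoOn_of_deriv_pos (convex_Ico 0 (π / 2)) ?_ fun d hd => ?_
  · exact ((continuousOn_tpIntegrand hq t).add (continuousOn_tpIntegrand hq (-t))).mono
      fun d hd => ⟨by linarith [hd.1, pi_pos], hd.2⟩
  rw [interior_Ico] at hd
  obtain ⟨hd₀, hd₁⟩ := hd
  have hc : 0 < cos d := cos_pos_of_mem_Ioo ⟨by linarith, hd₁⟩
  have hk : 0 < cos (2 * t) := cos_pos_of_mem_Ioo ⟨by linarith, by linarith⟩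
  have hk' : cos (2 * -t) = cos (2 * t) := by rw [mul_neg, cos_neg]
  have hsd : 0 < sin d := sin_pos_of_pos_of_lt_pi hd₀ (by linarith)
  rw [HasDerivAt.deriv (f := fun d => tpIntegrand q d t + tpIntegrand q d (-t))
    ((hasDerivAt_tpIntegrand hq hk hc).add (hasDerivAt_tpIntegrand hq (hk'.symm ▸ hk) hc)), hk']
  have hQP : sin (-t + d / 2) ^ 2 / cos d ≤ sin (t + d / 2) ^ 2 / cos d := by
    have h := sin_sq_sub_sin_sq (t + d / 2) (-t + d / 2)
    rw [show t + d / 2 + (-t + d / 2) = d by ring,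
      show t + d / 2 - (-t + d / 2) = 2 * t by ring] at h
    have : 0 < sin (2 * t) := sin_pos_of_pos_of_lt_pi (by linarith) (by linarith)
    exact div_le_div_of_nonneg_right (by nlinarith) hc.le
  have hsum : sin (t + d / 2) * cos (t - d / 2) + sin (-t + d / 2) * cos (-t - d / 2) = sin d := by
    rw [show t - d / 2 = -(-t + d / 2) by ring, show -t - d / 2 = -(t + d / 2) by ring, cos_neg,
      cos_neg, mul_comm (sin (-t + d / 2)), ← sin_add]
    ring_nf
  refine mul_add_mul_pos_of_le (tpProfileDeriv_pos hq hk (by positivity))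
    (monotoneOn_tpProfileDeriv hq hk (mem_Ici.2 (by positivity)) (mem_Ici.2 (by positivity)) hQP)
    ?_ ?_
  · have : 0 < sin (t + d / 2) := sin_pos_of_pos_of_lt_pi (by linarith) (by linarith)
    have : 0 < cos (t - d / 2) := cos_pos_of_mem_Ioo ⟨by linarith, by linarith⟩
    positivity
  · rw [← add_div, hsum]
    positivity

/-- For `q > 2` the angle function `F` is strictly decreasing on `(0, π/2]` and attains its
global minimum at the right angle `α = π/2`. -/
theorem stmt14 (q : ℝ) (hq : 2 < q) :
    StrictAntiOn (Ffun q) (Ioc 0 (π / 2)) ∧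
    ∀ α ∈ Ioc 0 (π / 2), Ffun q (π / 2) ≤ Ffun q α := by
  have hW : ∀ d, Continuous fun t => tpIntegrand q d t + tpIntegrand q d (-t) := fun d =>
    (continuous_tpIntegrand hq.le d).add ((continuous_tpIntegrand hq.le d).comp continuous_neg)
  have hanti : StrictAntiOn (Ffun q) (Ioc 0 (π / 2)) := by
    intro a ha b hb hab
    rw [Ffun_eq_integral_tpIntegrand hq.le ha, Ffun_eq_integral_tpIntegrand hq.le hb,
      integral_eq_integral_add_comp_neg (continuous_tpIntegrand hq.le _),
      integral_eq_integral_add_comp_neg (continuous_tpIntegrand hq.le _), ← sub_pos,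
      ← intervalIntegral.integral_sub ((hW _).intervalIntegrable _ _)
        ((hW _).intervalIntegrable _ _)]
    refine intervalIntegral.intervalIntegral_pos_of_pos_on
      (((hW _).sub (hW _)).intervalIntegrable _ _) (fun t ht => sub_pos.2 ?_) (by positivity)
    exact strictMonoOn_tpIntegrand_add_neg hq.le ht ⟨by linarith [hb.2], by linarith [hb.1]⟩
      ⟨by linarith [ha.2], by linarith [ha.1]⟩ (by linarith)
  exact ⟨hanti, fun α hα => hanti.antitoneOn hα ⟨by positivity, le_rfl⟩ hα.2⟩
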